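/- arXiv:1908.11689 — 5 statements merged into one kernel-verified Lean document; each statement's English description precedes it below -/
import Mathlib

section
/- Let C₁, C₂ be two coins on ℓ²(ℤ²;ℂ²) such that for every x ∈ ℤ: the diagonal entries of C₂(x,0) vanish, the off-diagonal entries of C₁(x,0) vanish, the off-diagonal entries of C₂(x,−1) vanish, and the diagonal entries of C₁(x,−1) vanish. Then the quantum walk U = T_y 𝐂₂ T_x 𝐂₁ satisfies: (i) for every x ∈ ℤ there exist α_x, β_x ∈ ℂ with |α_x| = |β_x| = 1 such that U|x,0;+⟩ = α_x |x+1,−1;−⟩ and U|x,−1;−⟩ = β_x |x+1,0;+⟩; (ii) the closed subspace H₀ := closed span of {|x,0;+⟩, |x,−1;−⟩ : x ∈ ℤ} satisfies U H₀ = H₀; (iii) the 2-dimensional subspace L₀ := span{|−1,0;+⟩, |−1,−1;−⟩} is wandering for U restricted to H₀, i.e. Uⁿ L₀ ⊥ L₀ for all integers n ≠ 0, and H₀ equals the closed span of ⋃_{n∈ℤ} Uⁿ L₀. -/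
open scoped InnerProductSpace

/-- The Hilbert space `ℓ²(ℤ²; ℂ²)`. -/
abbrev QWH : Type := lp (fun _ : ℤ × ℤ => EuclideanSpace ℂ (Fin 2)) 2

/-- The canonical basis vector supported at `z` in the spin component `i`
(`i = 0` is `|z;+⟩`, `i = 1` is `|z;−⟩`). -/
noncomputable def ket (z : ℤ × ℤ) (i : Fin 2) : QWH :=
  lp.single 2 z (EuclideanSpace.single i 1)

lemma ket_orth {z w : ℤ × ℤ} (i j : Fin 2) (h : z ≠ w) : ⟪ket z i, ket w j⟫_ℂ = 0 := by
  rw [ket, ket, lp.inner_single_left, lp.single_apply_ne 2 w _ h, inner_zero_right]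

lemma col_sum {M : Matrix (Fin 2) (Fin 2) ℂ} (hM : M ∈ Matrix.unitaryGroup (Fin 2) ℂ)
    (j : Fin 2) : star (M 0 j) * M 0 j + star (M 1 j) * M 1 j = 1 := by
  have h1 := Matrix.mem_unitaryGroup_iff'.mp hM
  have h2 := congrFun (congrFun h1 j) j
  simpa [Matrix.mul_apply, Matrix.conjTranspose_apply, Fin.sum_univ_two,
    Matrix.one_apply] using h2

lemma unim0 {M : Matrix (Fin 2) (Fin 2) ℂ} (hM : M ∈ Matrix.unitaryGroup (Fin 2) ℂ)
    {j : Fin 2} (h : M 1 j = 0) : ‖M 0 j‖ = 1 := by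
  have h2 := col_sum hM j
  rw [h, mul_zero, add_zero] at h2
  have h3 := congrArg norm h2
  rw [norm_mul, norm_star, norm_one] at h3
  nlinarith [norm_nonneg (M 0 j)]

lemma unim1 {M : Matrix (Fin 2) (Fin 2) ℂ} (hM : M ∈ Matrix.unitaryGroup (Fin 2) ℂ)
    {j : Fin 2} (h : M 0 j = 0) : ‖M 1 j‖ = 1 := by
  have h2 := col_sum hM j
  rw [h, mul_zero, zero_add] at h2
  have h3 := congrArg norm h2
  rw [norm_mul, norm_star, norm_one] at h3
  nlinarith [norm_nonneg (M 1 j)]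

set_option maxHeartbeats 1000000 in
/-- if, for every `x ∈ ℤ`, the diagonal entries of `C₂(x,0)` vanish, the
off-diagonal entries of `C₁(x,0)` vanish, the off-diagonal entries of `C₂(x,−1)` vanish and
the diagonal entries of `C₁(x,−1)` vanish, then the quantum walk `U = T_y 𝐂₂ T_x 𝐂₁`
satisfies: (i) `U|x,0;+⟩ = α_x |x+1,−1;−⟩`, `U|x,−1;−⟩ = β_x |x+1,0;+⟩` for unimodular
`α_x, β_x`; (ii) the closed span `H₀` of `{|x,0;+⟩, |x,−1;−⟩ : x ∈ ℤ}` is invariant,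
`U H₀ = H₀`; (iii) `L₀ = span{|−1,0;+⟩, |−1,−1;−⟩}` is wandering for `U` on `H₀`:
`Uⁿ L₀ ⊥ L₀` for `n ≠ 0`, and `H₀` is the closed span of `⋃_{n∈ℤ} Uⁿ L₀`. -/
theorem stmt2
    (C₁ C₂ : ℤ × ℤ → Matrix (Fin 2) (Fin 2) ℂ)
    (hC₁u : ∀ z, C₁ z ∈ Matrix.unitaryGroup (Fin 2) ℂ)
    (hC₂u : ∀ z, C₂ z ∈ Matrix.unitaryGroup (Fin 2) ℂ)
    (hC₂diag : ∀ x : ℤ, C₂ (x, 0) 0 0 = 0 ∧ C₂ (x, 0) 1 1 = 0)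
    (hC₁off : ∀ x : ℤ, C₁ (x, 0) 0 1 = 0 ∧ C₁ (x, 0) 1 0 = 0)
    (hC₂off : ∀ x : ℤ, C₂ (x, -1) 0 1 = 0 ∧ C₂ (x, -1) 1 0 = 0)
    (hC₁diag : ∀ x : ℤ, C₁ (x, -1) 0 0 = 0 ∧ C₁ (x, -1) 1 1 = 0)
    (CC₁ CC₂ Tx Ty : QWH →L[ℂ] QWH)
    -- the coin multiplication operators
    (hCC₁ : ∀ z i, CC₁ (ket z i) = ∑ j, C₁ z j i • ket z j)
    (hCC₂ : ∀ z i, CC₂ (ket z i) = ∑ j, C₂ z j i • ket z j)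
    -- the conditional shifts
    (hTx0 : ∀ z : ℤ × ℤ, Tx (ket z 0) = ket (z.1 + 1, z.2) 0)
    (hTx1 : ∀ z : ℤ × ℤ, Tx (ket z 1) = ket (z.1 - 1, z.2) 1)
    (hTy0 : ∀ z : ℤ × ℤ, Ty (ket z 0) = ket (z.1, z.2 + 1) 0)
    (hTy1 : ∀ z : ℤ × ℤ, Ty (ket z 1) = ket (z.1, z.2 - 1) 1)
    -- the quantum walk `U = T_y 𝐂₂ T_x 𝐂₁` is unitary
    (hU : Ty * CC₂ * Tx * CC₁ ∈ unitary (QWH →L[ℂ] QWH)) :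
    -- (i)
    (∀ x : ℤ, ∃ α β : ℂ, ‖α‖ = 1 ∧ ‖β‖ = 1 ∧
      (Ty * CC₂ * Tx * CC₁) (ket (x, 0) 0) = α • ket (x + 1, -1) 1 ∧
      (Ty * CC₂ * Tx * CC₁) (ket (x, -1) 1) = β • ket (x + 1, 0) 0) ∧
    -- (ii)
    (Submodule.map ((Ty * CC₂ * Tx * CC₁ : QWH →L[ℂ] QWH) : QWH →ₗ[ℂ] QWH)
        ((Submodule.span ℂ
          ((fun x : ℤ => ket (x, 0) 0) '' Set.univ ∪
            (fun x : ℤ => ket (x, -1) 1) '' Set.univ)).topologicalClosure)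
      = (Submodule.span ℂ
          ((fun x : ℤ => ket (x, 0) 0) '' Set.univ ∪
            (fun x : ℤ => ket (x, -1) 1) '' Set.univ)).topologicalClosure) ∧
    -- (iii)
    (∀ n : ℤ, n ≠ 0 →
      ∀ x ∈ (Submodule.span ℂ {ket (-1, 0) 0, ket (-1, -1) 1}).map
          ((((⟨Ty * CC₂ * Tx * CC₁, hU⟩ : unitary (QWH →L[ℂ] QWH)) ^ n :
            unitary (QWH →L[ℂ] QWH)) : QWH →L[ℂ] QWH) : QWH →ₗ[ℂ] QWH),
      ∀ y ∈ Submodule.span ℂ {ket (-1, 0) 0, ket (-1, -1) 1}, ⟪x, y⟫_ℂ = 0) ∧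
    ((Submodule.span ℂ
        ((fun x : ℤ => ket (x, 0) 0) '' Set.univ ∪
          (fun x : ℤ => ket (x, -1) 1) '' Set.univ)).topologicalClosure
      = (⨆ n : ℤ, (Submodule.span ℂ {ket (-1, 0) 0, ket (-1, -1) 1}).map
          ((((⟨Ty * CC₂ * Tx * CC₁, hU⟩ : unitary (QWH →L[ℂ] QWH)) ^ n :
            unitary (QWH →L[ℂ] QWH)) : QWH →L[ℂ] QWH) : QWH →ₗ[ℂ] QWH)).topologicalClosure) := by
  set U : QWH →L[ℂ] QWH := Ty * CC₂ * Tx * CC₁ with hUdef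
  have hstep1 : ∀ x : ℤ, ∃ α : ℂ, ‖α‖ = 1 ∧ U (ket (x, 0) 0) = α • ket (x + 1, -1) 1 := by
    intro x
    refine ⟨C₂ (x + 1, 0) 1 0 * C₁ (x, 0) 0 0, ?_, ?_⟩
    · rw [norm_mul, unim1 (hC₂u _) (hC₂diag (x + 1)).1, unim0 (hC₁u _) (hC₁off x).2, mul_one]
    · have e1 : CC₁ (ket (x, 0) 0) = C₁ (x, 0) 0 0 • ket (x, 0) 0 := by
        rw [hCC₁]; simp [Fin.sum_univ_two, (hC₁off x).2]
      have e2 : CC₂ (ket (x + 1, 0) 0) = C₂ (x + 1, 0) 1 0 • ket (x + 1, 0) 1 := by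
        rw [hCC₂]; simp [Fin.sum_univ_two, (hC₂diag (x + 1)).1]
      calc U (ket (x, 0) 0) = Ty (CC₂ (Tx (CC₁ (ket (x, 0) 0)))) := by
            simp [hUdef, ContinuousLinearMap.mul_apply]
        _ = Ty (CC₂ (Tx (C₁ (x, 0) 0 0 • ket (x, 0) 0))) := by rw [e1]
        _ = C₁ (x, 0) 0 0 • Ty (CC₂ (ket (x + 1, 0) 0)) := by
            rw [map_smul, hTx0 (x, 0), map_smul, map_smul]
        _ = C₁ (x, 0) 0 0 • (C₂ (x + 1, 0) 1 0 • Ty (ket (x + 1, 0) 1)) := by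
            rw [e2, map_smul]
        _ = (C₂ (x + 1, 0) 1 0 * C₁ (x, 0) 0 0) • ket (x + 1, -1) 1 := by
            rw [hTy1 (x + 1, 0)]; norm_num [smul_smul, mul_comm]
  have hstep2 : ∀ x : ℤ, ∃ β : ℂ, ‖β‖ = 1 ∧ U (ket (x, -1) 1) = β • ket (x + 1, 0) 0 := by
    intro x
    refine ⟨C₂ (x + 1, -1) 0 0 * C₁ (x, -1) 0 1, ?_, ?_⟩
    · rw [norm_mul, unim0 (hC₂u _) (hC₂off (x + 1)).2, unim0 (hC₁u _) (hC₁diag x).2, mul_one]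
    · have e1 : CC₁ (ket (x, -1) 1) = C₁ (x, -1) 0 1 • ket (x, -1) 0 := by
        rw [hCC₁]; simp [Fin.sum_univ_two, (hC₁diag x).2]
      have e2 : CC₂ (ket (x + 1, -1) 0) = C₂ (x + 1, -1) 0 0 • ket (x + 1, -1) 0 := by
        rw [hCC₂]; simp [Fin.sum_univ_two, (hC₂off (x + 1)).2]
      calc U (ket (x, -1) 1) = Ty (CC₂ (Tx (CC₁ (ket (x, -1) 1)))) := by
            simp [hUdef, ContinuousLinearMap.mul_apply]
        _ = Ty (CC₂ (Tx (C₁ (x, -1) 0 1 • ket (x, -1) 0))) := by rw [e1]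
        _ = C₁ (x, -1) 0 1 • Ty (CC₂ (ket (x + 1, -1) 0)) := by
            rw [map_smul, hTx0 (x, -1), map_smul, map_smul]
        _ = C₁ (x, -1) 0 1 • (C₂ (x + 1, -1) 0 0 • Ty (ket (x + 1, -1) 0)) := by
            rw [e2, map_smul]
        _ = (C₂ (x + 1, -1) 0 0 * C₁ (x, -1) 0 1) • ket (x + 1, 0) 0 := by
            rw [hTy0 (x + 1, -1)]; norm_num [smul_smul, mul_comm]
  set Uu : unitary (QWH →L[ℂ] QWH) := ⟨U, hU⟩ with hUu
  have hUinv : ∀ v : QWH, (star U) (U v) = v := by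
    intro v
    rw [← ContinuousLinearMap.mul_apply, hU.1, ContinuousLinearMap.one_apply]
  have hinv1 : ∀ x : ℤ, ∃ γ : ℂ, ‖γ‖ = 1 ∧
      (star U) (ket (x, 0) 0) = γ • ket (x - 1, -1) 1 := by
    intro x
    obtain ⟨β, hβ, hb⟩ := hstep2 (x - 1)
    rw [Int.sub_add_cancel] at hb
    have hβ0 : β ≠ 0 := fun h => by simp [h] at hβ
    refine ⟨β⁻¹, by rw [norm_inv, hβ, inv_one], ?_⟩
    have hket : ket (x, 0) 0 = β⁻¹ • U (ket (x - 1, -1) 1) := by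
      rw [hb, smul_smul, inv_mul_cancel₀ hβ0, one_smul]
    rw [hket, map_smul, hUinv]
  have hinv2 : ∀ x : ℤ, ∃ γ : ℂ, ‖γ‖ = 1 ∧
      (star U) (ket (x, -1) 1) = γ • ket (x - 1, 0) 0 := by
    intro x
    obtain ⟨α, hα, ha⟩ := hstep1 (x - 1)
    rw [Int.sub_add_cancel] at ha
    have hα0 : α ≠ 0 := fun h => by simp [h] at hα
    refine ⟨α⁻¹, by rw [norm_inv, hα, inv_one], ?_⟩
    have hket : ket (x, -1) 1 = α⁻¹ • U (ket (x - 1, 0) 0) := by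
      rw [ha, smul_smul, inv_mul_cancel₀ hα0, one_smul]
    rw [hket, map_smul, hUinv]
  -- the key structure lemma
  have key : ∀ n : ℤ, ∃ c d : ℂ, ‖c‖ = 1 ∧ ‖d‖ = 1 ∧
      (((Uu ^ n : unitary (QWH →L[ℂ] QWH)) : QWH →L[ℂ] QWH) (ket (-1, 0) 0)
          = c • ket (n - 1, 0) 0 ∧
        ((Uu ^ n : unitary (QWH →L[ℂ] QWH)) : QWH →L[ℂ] QWH) (ket (-1, -1) 1)
          = d • ket (n - 1, -1) 1 ∨
       ((Uu ^ n : unitary (QWH →L[ℂ] QWH)) : QWH →L[ℂ] QWH) (ket (-1, 0) 0)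
          = c • ket (n - 1, -1) 1 ∧
        ((Uu ^ n : unitary (QWH →L[ℂ] QWH)) : QWH →L[ℂ] QWH) (ket (-1, -1) 1)
          = d • ket (n - 1, 0) 0) := by
    intro n
    induction n using Int.induction_on with
    | zero =>
      have h0 : ((Uu ^ (0 : ℤ) : unitary (QWH →L[ℂ] QWH)) : QWH →L[ℂ] QWH)
          = (1 : QWH →L[ℂ] QWH) := by rw [zpow_zero]; rfl
      have hm : (0 : ℤ) - 1 = -1 := by norm_num
      refine ⟨1, 1, norm_one, norm_one, Or.inl ⟨?_, ?_⟩⟩ <;>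
        rw [h0, ContinuousLinearMap.one_apply, one_smul, hm]
    | succ k ih =>
      obtain ⟨c, d, hc, hd, hcd⟩ := ih
      have hpow : ((Uu ^ ((k : ℤ) + 1) : unitary (QWH →L[ℂ] QWH)) : QWH →L[ℂ] QWH)
          = U * ((Uu ^ (k : ℤ) : unitary (QWH →L[ℂ] QWH)) : QWH →L[ℂ] QWH) := by
        rw [add_comm, zpow_one_add]
        rfl
      rcases hcd with ⟨h1, h2⟩ | ⟨h1, h2⟩
      · obtain ⟨α, hα, ha⟩ := hstep1 ((k : ℤ) - 1)
        obtain ⟨β, hβ, hb⟩ := hstep2 ((k : ℤ) - 1)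
        rw [Int.sub_add_cancel] at ha hb
        refine ⟨α * c, β * d, by rw [norm_mul, hα, hc, mul_one],
          by rw [norm_mul, hβ, hd, mul_one], Or.inr ⟨?_, ?_⟩⟩
        · rw [hpow, ContinuousLinearMap.mul_apply, h1, map_smul, ha, smul_smul,
            add_sub_cancel_right, mul_comm]
        · rw [hpow, ContinuousLinearMap.mul_apply, h2, map_smul, hb, smul_smul,
            add_sub_cancel_right, mul_comm]
      · obtain ⟨β, hβ, hb⟩ := hstep2 ((k : ℤ) - 1)
        obtain ⟨α, hα, ha⟩ := hstep1 ((k : ℤ) - 1)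
        rw [Int.sub_add_cancel] at ha hb
        refine ⟨β * c, α * d, by rw [norm_mul, hβ, hc, mul_one],
          by rw [norm_mul, hα, hd, mul_one], Or.inl ⟨?_, ?_⟩⟩
        · rw [hpow, ContinuousLinearMap.mul_apply, h1, map_smul, hb, smul_smul,
            add_sub_cancel_right, mul_comm]
        · rw [hpow, ContinuousLinearMap.mul_apply, h2, map_smul, ha, smul_smul,
            add_sub_cancel_right, mul_comm]
    | pred k ih =>
      obtain ⟨c, d, hc, hd, hcd⟩ := ih
      have hpow : ((Uu ^ (-(k : ℤ) - 1) : unitary (QWH →L[ℂ] QWH)) : QWH →L[ℂ] QWH)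
          = (star U) * ((Uu ^ (-(k : ℤ)) : unitary (QWH →L[ℂ] QWH)) : QWH →L[ℂ] QWH) := by
        rw [sub_eq_add_neg, add_comm, zpow_add, zpow_neg_one]
        rfl
      rcases hcd with ⟨h1, h2⟩ | ⟨h1, h2⟩
      · obtain ⟨γ, hγ, hg⟩ := hinv1 (-(k : ℤ) - 1)
        obtain ⟨δ, hδ, hdd⟩ := hinv2 (-(k : ℤ) - 1)
        refine ⟨γ * c, δ * d, by rw [norm_mul, hγ, hc, mul_one],
          by rw [norm_mul, hδ, hd, mul_one], Or.inr ⟨?_, ?_⟩⟩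
        · rw [hpow, ContinuousLinearMap.mul_apply, h1, map_smul, hg, smul_smul, mul_comm]
        · rw [hpow, ContinuousLinearMap.mul_apply, h2, map_smul, hdd, smul_smul, mul_comm]
      · obtain ⟨δ, hδ, hdd⟩ := hinv2 (-(k : ℤ) - 1)
        obtain ⟨γ, hγ, hg⟩ := hinv1 (-(k : ℤ) - 1)
        refine ⟨δ * c, γ * d, by rw [norm_mul, hδ, hc, mul_one],
          by rw [norm_mul, hγ, hd, mul_one], Or.inl ⟨?_, ?_⟩⟩
        · rw [hpow, ContinuousLinearMap.mul_apply, h1, map_smul, hdd, smul_smul, mul_comm]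
        · rw [hpow, ContinuousLinearMap.mul_apply, h2, map_smul, hg, smul_smul, mul_comm]
  set S : Set QWH := (fun x : ℤ => ket (x, 0) 0) '' Set.univ ∪
      (fun x : ℤ => ket (x, -1) 1) '' Set.univ with hSdef
  have hS1 : ∀ x : ℤ, ket (x, 0) 0 ∈ S := fun x => Or.inl ⟨x, trivial, rfl⟩
  have hS2 : ∀ x : ℤ, ket (x, -1) 1 ∈ S := fun x => Or.inr ⟨x, trivial, rfl⟩
  have hmapV : Submodule.map (U : QWH →ₗ[ℂ] QWH) (Submodule.span ℂ S) = Submodule.span ℂ S := by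
    apply le_antisymm
    · rw [Submodule.map_span]
      apply Submodule.span_le.2
      rintro _ ⟨s, hs, rfl⟩
      rcases hs with ⟨x, -, rfl⟩ | ⟨x, -, rfl⟩
      · obtain ⟨α, hα, ha⟩ := hstep1 x
        exact ha ▸ Submodule.smul_mem _ _ (Submodule.subset_span (hS2 (x + 1)))
      · obtain ⟨β, hβ, hb⟩ := hstep2 x
        exact hb ▸ Submodule.smul_mem _ _ (Submodule.subset_span (hS1 (x + 1)))
    · apply Submodule.span_le.2
      rintro s hs
      rcases hs with ⟨x, -, rfl⟩ | ⟨x, -, rfl⟩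
      · obtain ⟨β, hβ, hb⟩ := hstep2 (x - 1)
        rw [Int.sub_add_cancel] at hb
        have hβ0 : β ≠ 0 := fun h => by simp [h] at hβ
        refine Submodule.mem_map.2 ⟨β⁻¹ • ket (x - 1, -1) 1,
          Submodule.smul_mem _ _ (Submodule.subset_span (hS2 (x - 1))), ?_⟩
        rw [map_smul, ContinuousLinearMap.coe_coe, hb, smul_smul, inv_mul_cancel₀ hβ0, one_smul]
      · obtain ⟨α, hα, ha⟩ := hstep1 (x - 1)
        rw [Int.sub_add_cancel] at ha
        have hα0 : α ≠ 0 := fun h => by simp [h] at hα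
        refine Submodule.mem_map.2 ⟨α⁻¹ • ket (x - 1, 0) 0,
          Submodule.smul_mem _ _ (Submodule.subset_span (hS1 (x - 1))), ?_⟩
        rw [map_smul, ContinuousLinearMap.coe_coe, ha, smul_smul, inv_mul_cancel₀ hα0, one_smul]
  refine ⟨?_, ?_, ?_, ?_⟩
  · -- (i)
    intro x
    obtain ⟨α, hα, ha⟩ := hstep1 x
    obtain ⟨β, hβ, hb⟩ := hstep2 x
    exact ⟨α, β, hα, hβ, ha, hb⟩
  · -- (ii)
    set e : QWH ≃L[ℂ] QWH := ContinuousLinearEquiv.ofUnit (Unitary.toUnits Uu) with hedef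
    have he : ∀ v : QWH, U v = e v := fun v => rfl
    apply SetLike.coe_injective
    rw [Submodule.map_coe, Submodule.topologicalClosure_coe]
    calc U '' closure ((Submodule.span ℂ S : Submodule ℂ QWH) : Set QWH)
        = e '' closure ((Submodule.span ℂ S : Submodule ℂ QWH) : Set QWH) :=
          Set.image_congr' he
      _ = closure (e '' ((Submodule.span ℂ S : Submodule ℂ QWH) : Set QWH)) :=
          e.toHomeomorph.image_closure _
      _ = closure (U '' ((Submodule.span ℂ S : Submodule ℂ QWH) : Set QWH)) := by
          rw [Set.image_congr' he]
      _ = closure ((Submodule.span ℂ S : Submodule ℂ QWH) : Set QWH) := by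
          rw [← ContinuousLinearMap.coe_coe U, ← Submodule.map_coe, hmapV]
  · -- (iii) wandering
    intro n hn x hx y hy
    rw [Submodule.mem_map] at hx
    obtain ⟨p, hp, rfl⟩ := hx
    rw [Submodule.mem_span_pair] at hp hy
    obtain ⟨a, b, rfl⟩ := hp
    obtain ⟨a', b', rfl⟩ := hy
    obtain ⟨c, d, hc, hd, hcd⟩ := key n
    have hne : ∀ (t s : ℤ) (i j : Fin 2), ⟪ket (n - 1, t) i, ket (-1, s) j⟫_ℂ = 0 := by
      intro t s i j
      refine ket_orth _ _ (fun hzw => hn ?_)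
      have h1 := congrArg Prod.fst hzw
      simp only at h1
      omega
    rcases hcd with ⟨h1, h2⟩ | ⟨h1, h2⟩ <;>
      simp [map_add, map_smul, h1, h2, inner_add_left, inner_add_right, inner_smul_left,
        inner_smul_right, hne]
  · -- (iv)
    apply le_antisymm
    · apply Submodule.topologicalClosure_mono
      apply Submodule.span_le.2
      rintro s hs
      rcases hs with ⟨x, -, rfl⟩ | ⟨x, -, rfl⟩
      · obtain ⟨c, d, hc, hd, hcd⟩ := key (x + 1)
        rw [add_sub_cancel_right] at hcd
        have hc0 : c ≠ 0 := fun h => by simp [h] at hc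
        have hd0 : d ≠ 0 := fun h => by simp [h] at hd
        refine Submodule.mem_iSup_of_mem (x + 1) ?_
        rcases hcd with ⟨h1, h2⟩ | ⟨h1, h2⟩
        · exact Submodule.mem_map.2 ⟨c⁻¹ • ket (-1, 0) 0,
            Submodule.smul_mem _ _ (Submodule.subset_span (Set.mem_insert _ _)),
            by rw [map_smul, ContinuousLinearMap.coe_coe, h1, smul_smul, inv_mul_cancel₀ hc0, one_smul]⟩
        · exact Submodule.mem_map.2 ⟨d⁻¹ • ket (-1, -1) 1,
            Submodule.smul_mem _ _ (Submodule.subset_span (Set.mem_insert_of_mem _ rfl)),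
            by rw [map_smul, ContinuousLinearMap.coe_coe, h2, smul_smul, inv_mul_cancel₀ hd0, one_smul]⟩
      · obtain ⟨c, d, hc, hd, hcd⟩ := key (x + 1)
        rw [add_sub_cancel_right] at hcd
        have hc0 : c ≠ 0 := fun h => by simp [h] at hc
        have hd0 : d ≠ 0 := fun h => by simp [h] at hd
        refine Submodule.mem_iSup_of_mem (x + 1) ?_
        rcases hcd with ⟨h1, h2⟩ | ⟨h1, h2⟩
        · exact Submodule.mem_map.2 ⟨d⁻¹ • ket (-1, -1) 1,
            Submodule.smul_mem _ _ (Submodule.subset_span (Set.mem_insert_of_mem _ rfl)),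
            by rw [map_smul, ContinuousLinearMap.coe_coe, h2, smul_smul, inv_mul_cancel₀ hd0, one_smul]⟩
        · exact Submodule.mem_map.2 ⟨c⁻¹ • ket (-1, 0) 0,
            Submodule.smul_mem _ _ (Submodule.subset_span (Set.mem_insert _ _)),
            by rw [map_smul, ContinuousLinearMap.coe_coe, h1, smul_smul, inv_mul_cancel₀ hc0, one_smul]⟩
    · apply Submodule.topologicalClosure_minimal
      · apply iSup_le
        intro n
        rw [Submodule.map_span, Set.image_insert_eq, Set.image_singleton]
        apply Submodule.span_le.2
        obtain ⟨c, d, hc, hd, hcd⟩ := key n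
        intro s hs
        simp only [Set.mem_insert_iff, Set.mem_singleton_iff] at hs
        rcases hs with rfl | rfl
        · rcases hcd with ⟨h1, -⟩ | ⟨h1, -⟩
          · rw [ContinuousLinearMap.coe_coe, h1]
            exact Submodule.le_topologicalClosure _
              (Submodule.smul_mem _ _ (Submodule.subset_span (hS1 (n - 1))))
          · rw [ContinuousLinearMap.coe_coe, h1]
            exact Submodule.le_topologicalClosure _
              (Submodule.smul_mem _ _ (Submodule.subset_span (hS2 (n - 1))))
        · rcases hcd with ⟨-, h2⟩ | ⟨-, h2⟩
          · rw [ContinuousLinearMap.coe_coe, h2]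
            exact Submodule.le_topologicalClosure _
              (Submodule.smul_mem _ _ (Submodule.subset_span (hS2 (n - 1))))
          · rw [ContinuousLinearMap.coe_coe, h2]
            exact Submodule.le_topologicalClosure _
              (Submodule.smul_mem _ _ (Submodule.subset_span (hS1 (n - 1))))
      · exact Submodule.isClosed_topologicalClosure _
end

section
/- Let C₁, C₂ be two coins on ℓ²(ℤ²;ℂ²) such that for every x ∈ ℤ: the diagonal entries of C₂(x,0) vanish, the off-diagonal entries of C₁(x,0) vanish, the off-diagonal entries of C₂(x,−1) vanish, and the diagonal entries of C₁(x,−1) vanish. Let U = T_y 𝐂₂ T_x 𝐂₁ and let P be the half-line projection. Then the flux operator Φ := U*PU − P equals the orthogonal projection onto the 2-dimensional subspace L₀ := span{|−1,0;+⟩, |−1,−1;−⟩}; in particular dim ker(Φ − I) = 2, ker(Φ + I) = {0}, and ind(Φ) = 2. -/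
open scoped InnerProductSpace

/-- The subspace `L₀ := span{|−1,0;+⟩, |−1,−1;−⟩}`. -/
noncomputable def Lzero : Submodule ℂ QWH :=
  Submodule.span ℂ {ket (-1, 0) 0, ket (-1, -1) 1}

instance : FiniteDimensional ℂ Lzero :=
  FiniteDimensional.span_of_finite ℂ (Set.toFinite _)

lemma ket_inner (z w : ℤ × ℤ) (i j : Fin 2) :
    ⟪ket z i, ket w j⟫_ℂ = if z = w ∧ i = j then 1 else 0 := by
  unfold ket
  rw [lp.inner_single_left]
  by_cases hz : z = w
  · subst hz
    rw [lp.single_apply_self, EuclideanSpace.inner_single_left, EuclideanSpace.single_apply]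
    simp [eq_comm]
  · rw [lp.single_apply_ne 2 w _ hz]
    simp [hz]

lemma lp_single_add (z : ℤ × ℤ) (a b : EuclideanSpace ℂ (Fin 2)) :
    lp.single (E := fun _ : ℤ × ℤ => EuclideanSpace ℂ (Fin 2)) 2 z (a + b)
      = lp.single 2 z a + lp.single 2 z b := by
  apply lp.ext
  funext w
  by_cases hw : w = z
  · subst hw
    simp [lp.single_apply_self]
  · simp [lp.single_apply_ne 2 z _ hw]

lemma ket_decomp (z : ℤ × ℤ) (v : EuclideanSpace ℂ (Fin 2)) :
    lp.single (E := fun _ : ℤ × ℤ => EuclideanSpace ℂ (Fin 2)) 2 z v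
      = v 0 • ket z 0 + v 1 • ket z 1 := by
  have hv : v = EuclideanSpace.single 0 (v 0) + EuclideanSpace.single 1 (v 1) := by
    ext j
    fin_cases j <;> simp [EuclideanSpace.single_apply]
  have h0 : EuclideanSpace.single (0 : Fin 2) (v 0) = v 0 • EuclideanSpace.single (0:Fin 2) (1:ℂ) := by
    ext j; simp [EuclideanSpace.single_apply]
  have h1 : EuclideanSpace.single (1 : Fin 2) (v 1) = v 1 • EuclideanSpace.single (1:Fin 2) (1:ℂ) := by
    ext j; simp [EuclideanSpace.single_apply]
  nth_rewrite 1 [hv]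
  rw [lp_single_add, h0, h1, lp.single_smul, lp.single_smul]
  rfl

lemma clm_ext_ket {A B : QWH →L[ℂ] QWH} (h : ∀ z i, A (ket z i) = B (ket z i)) : A = B := by
  refine ContinuousLinearMap.ext fun f => ?_
  have hf : HasSum (fun z : ℤ × ℤ => lp.single 2 z (f z)) f :=
    lp.hasSum_single ENNReal.ofNat_ne_top f
  have hs : ∀ z : ℤ × ℤ, A (lp.single 2 z (f z)) = B (lp.single 2 z (f z)) := by
    intro z
    rw [ket_decomp, map_add, map_add, map_smul, map_smul, map_smul, map_smul, h, h]
  have hA : HasSum (fun z : ℤ × ℤ => A (lp.single 2 z (f z))) (A f) := hf.mapL A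
  have hB : HasSum (fun z : ℤ × ℤ => B (lp.single 2 z (f z))) (B f) := hf.mapL B
  exact hA.unique (by simpa only [hs] using hB)


lemma ket_orthonormal : Orthonormal ℂ ![ket (-1, 0) 0, ket (-1, -1) 1] := by
  rw [orthonormal_iff_ite]
  intro i j
  fin_cases i <;> fin_cases j <;>
    simp [ket_inner, Prod.ext_iff] <;>
    left <;> simp [ket, lp.norm_single]

lemma finrank_Lzero : Module.finrank ℂ Lzero = 2 := by
  have hr : ({ket (-1, 0) 0, ket (-1, -1) 1} : Set QWH)
      = Set.range ![ket (-1, 0) 0, ket (-1, -1) 1] := by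
    ext v
    simp [Fin.exists_fin_two, eq_comm]
    tauto
  rw [Lzero, hr, finrank_span_eq_card ket_orthonormal.linearIndependent]
  simp

lemma Q_ket (z : ℤ × ℤ) (i : Fin 2) :
    (Lzero.subtypeL.comp (Lzero.orthogonalProjectionOnto)) (ket z i) =
      if (z = (-1, 0) ∧ i = 0) ∨ (z = (-1, -1) ∧ i = 1) then ket z i else 0 := by
  split_ifs with h
  · rcases h with ⟨hz, hi⟩ | ⟨hz, hi⟩ <;> subst hz <;> subst hi <;>
    · show Lzero.starProjection _ = _
      rw [Submodule.starProjection_eq_self_iff]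
      exact Submodule.subset_span (by simp)
  · push_neg at h
    show ((Lzero.orthogonalProjectionOnto (ket z i) : Lzero) : QWH) = _
    rw [Submodule.orthogonalProjectionOnto_apply_of_mem_orthogonal]
    · simp
    rw [Submodule.mem_orthogonal]
    intro u hu
    induction hu using Submodule.span_induction with
    | mem u hu =>
        rcases hu with rfl | hu
        · rw [ket_inner, if_neg]
          rintro ⟨rfl, rfl⟩
          exact (h.1 rfl) rfl
        · rcases hu with rfl
          rw [ket_inner, if_neg]
          rintro ⟨rfl, rfl⟩
          exact (h.2 rfl) rfl
    | zero => simp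
    | add a b _ _ ha hb => rw [inner_add_left, ha, hb, add_zero]
    | smul c a _ ha => rw [inner_smul_left, ha, mul_zero]


set_option maxHeartbeats 1000000 in
/-- under the vanishing conditions on the coin entries, the flux operator
`Φ = U*PU − P` of the quantum walk `U = T_y 𝐂₂ T_x 𝐂₁` out of the half-line projection `P`
equals the orthogonal projection onto `L₀ = span{|−1,0;+⟩, |−1,−1;−⟩}`; in particular
`dim ker(Φ − I) = 2`, `ker(Φ + I) = {0}` and `ind(Φ) = 2`. -/
theorem stmt3
    (C₁ C₂ : ℤ × ℤ → Matrix (Fin 2) (Fin 2) ℂ)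
    (hC₁u : ∀ z, C₁ z ∈ Matrix.unitaryGroup (Fin 2) ℂ)
    (hC₂u : ∀ z, C₂ z ∈ Matrix.unitaryGroup (Fin 2) ℂ)
    (hC₂diag : ∀ x : ℤ, C₂ (x, 0) 0 0 = 0 ∧ C₂ (x, 0) 1 1 = 0)
    (hC₁off : ∀ x : ℤ, C₁ (x, 0) 0 1 = 0 ∧ C₁ (x, 0) 1 0 = 0)
    (hC₂off : ∀ x : ℤ, C₂ (x, -1) 0 1 = 0 ∧ C₂ (x, -1) 1 0 = 0)
    (hC₁diag : ∀ x : ℤ, C₁ (x, -1) 0 0 = 0 ∧ C₁ (x, -1) 1 1 = 0)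
    (CC₁ CC₂ Tx Ty P : QWH →L[ℂ] QWH)
    -- the coin multiplication operators
    (hCC₁ : ∀ z i, CC₁ (ket z i) = ∑ j, C₁ z j i • ket z j)
    (hCC₂ : ∀ z i, CC₂ (ket z i) = ∑ j, C₂ z j i • ket z j)
    -- the conditional shifts
    (hTx0 : ∀ z : ℤ × ℤ, Tx (ket z 0) = ket (z.1 + 1, z.2) 0)
    (hTx1 : ∀ z : ℤ × ℤ, Tx (ket z 1) = ket (z.1 - 1, z.2) 1)
    (hTy0 : ∀ z : ℤ × ℤ, Ty (ket z 0) = ket (z.1, z.2 + 1) 0)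
    (hTy1 : ∀ z : ℤ × ℤ, Ty (ket z 1) = ket (z.1, z.2 - 1) 1)
    -- the half-line projection
    (hP : ∀ (z : ℤ × ℤ) (i : Fin 2),
      P (ket z i) =
        if 0 ≤ z.1 ∧ ((z.2 = 0 ∧ i = 0) ∨ (z.2 = -1 ∧ i = 1)) then ket z i else 0)
    -- the quantum walk `U = T_y 𝐂₂ T_x 𝐂₁` is unitary
    (hU : Ty * CC₂ * Tx * CC₁ ∈ unitary (QWH →L[ℂ] QWH)) :
    star (Ty * CC₂ * Tx * CC₁) * P * (Ty * CC₂ * Tx * CC₁) - P =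
        Lzero.subtypeL.comp (Lzero.orthogonalProjectionOnto) ∧
      Module.finrank ℂ
        (LinearMap.ker (((star (Ty * CC₂ * Tx * CC₁) * P * (Ty * CC₂ * Tx * CC₁) - P - 1 : QWH →L[ℂ] QWH)) : QWH →ₗ[ℂ] QWH)) = 2 ∧
      LinearMap.ker (((star (Ty * CC₂ * Tx * CC₁) * P * (Ty * CC₂ * Tx * CC₁) - P + 1 : QWH →L[ℂ] QWH)) : QWH →ₗ[ℂ] QWH) = ⊥ ∧
      (Module.finrank ℂ
          (LinearMap.ker (((star (Ty * CC₂ * Tx * CC₁) * P * (Ty * CC₂ * Tx * CC₁) - P - 1 : QWH →L[ℂ] QWH)) : QWH →ₗ[ℂ] QWH)) : ℤ)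
        - Module.finrank ℂ
            (LinearMap.ker (((star (Ty * CC₂ * Tx * CC₁) * P * (Ty * CC₂ * Tx * CC₁) - P + 1 : QWH →L[ℂ] QWH)) : QWH →ₗ[ℂ] QWH))
        = 2 := by
  set U : QWH →L[ℂ] QWH := Ty * CC₂ * Tx * CC₁ with hUdef
  set Q : QWH →L[ℂ] QWH := Lzero.subtypeL.comp (Lzero.orthogonalProjectionOnto) with hQdef
  have hUket : ∀ (x y : ℤ) (i : Fin 2),
      U (ket (x, y) i) =
        (C₁ (x, y) 0 i * C₂ (x + 1, y) 0 0) • ket (x + 1, y + 1) 0 +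
        (C₁ (x, y) 0 i * C₂ (x + 1, y) 1 0) • ket (x + 1, y - 1) 1 +
        ((C₁ (x, y) 1 i * C₂ (x - 1, y) 0 1) • ket (x - 1, y + 1) 0 +
        (C₁ (x, y) 1 i * C₂ (x - 1, y) 1 1) • ket (x - 1, y - 1) 1) := by
    intro x y i
    rw [hUdef]
    simp only [ContinuousLinearMap.mul_apply, hCC₁, Fin.sum_univ_two, map_add, map_smul,
      hTx0, hTx1, hCC₂, hTy0, hTy1, smul_add, smul_smul]
  have hPket : ∀ (a b : ℤ) (j : Fin 2), P (ket (a, b) j) =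
      if 0 ≤ a ∧ ((b = 0 ∧ j = 0) ∨ (b = -1 ∧ j = 1)) then ket (a, b) j else 0 :=
    fun a b j => hP (a, b) j
  have hQket : ∀ (z : ℤ × ℤ) (i : Fin 2), Q (ket z i) =
      if (z = (-1, 0) ∧ i = 0) ∨ (z = (-1, -1) ∧ i = 1) then ket z i else 0 := Q_ket
  have key : P * U = U * (P + Q) := by
    apply clm_ext_ket
    intro z i
    obtain ⟨x, y⟩ := z
    show P (U (ket (x, y) i)) = U (P (ket (x, y) i) + Q (ket (x, y) i))
    by_cases hy0 : y = 0
    · subst hy0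
      obtain ⟨hd1, hd2⟩ := hC₂diag (x + 1)
      obtain ⟨hd3, hd4⟩ := hC₂diag (x - 1)
      obtain ⟨ho1, ho2⟩ := hC₁off x
      fin_cases i
      · by_cases hx0 : (0:ℤ) ≤ x
        · have e1 : (0:ℤ) ≤ x + 1 := by omega
          have e2 : x ≠ -1 := by omega
          simp [hUket, hPket, hQket, hd1, hd2, hd3, hd4, ho1, ho2, Prod.ext_iff, e1, hx0, e2]
        · by_cases hxm : x = -1
          · subst hxm
            norm_num at hd1 hd2 hd3 hd4 ho1 ho2
            norm_num [hUket, hPket, hQket, hd1, hd2, hd3, hd4, ho1, ho2, Prod.ext_iff]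
          · have e1 : ¬ (0:ℤ) ≤ x + 1 := by omega
            simp [hUket, hPket, hQket, hd1, hd2, hd3, hd4, ho1, ho2, Prod.ext_iff, e1, hx0, hxm]
      · simp [hUket, hPket, hQket, hd1, hd2, hd3, hd4, ho1, ho2, Prod.ext_iff]
    · by_cases hy1 : y = -1
      · subst hy1
        obtain ⟨hf1, hf2⟩ := hC₂off (x + 1)
        obtain ⟨hf3, hf4⟩ := hC₂off (x - 1)
        obtain ⟨hg1, hg2⟩ := hC₁diag x
        fin_cases i
        · simp [hUket, hPket, hQket, hf1, hf2, hf3, hf4, hg1, hg2, Prod.ext_iff]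
        · by_cases hx0 : (0:ℤ) ≤ x
          · have e1 : (0:ℤ) ≤ x + 1 := by omega
            have e2 : x ≠ -1 := by omega
            simp [hUket, hPket, hQket, hf1, hf2, hf3, hf4, hg1, hg2, Prod.ext_iff, e1, hx0, e2]
          · by_cases hxm : x = -1
            · subst hxm
              norm_num at hf1 hf2 hf3 hf4 hg1 hg2
              norm_num [hUket, hPket, hQket, hf1, hf2, hf3, hf4, hg1, hg2, Prod.ext_iff]
            · have e1 : ¬ (0:ℤ) ≤ x + 1 := by omega
              simp [hUket, hPket, hQket, hf1, hf2, hf3, hf4, hg1, hg2, Prod.ext_iff, e1,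
                hx0, hxm]
      · have f1 : y + 1 ≠ 0 := by omega
        have f2 : y - 1 ≠ -1 := by omega
        simp [hUket, hPket, hQket, Prod.ext_iff, f1, f2, hy0, hy1]
  have hPhi : star U * P * U - P = Q := by
    have h1 : star U * U = 1 := (Unitary.mem_iff.mp hU).1
    calc star U * P * U - P = star U * (P * U) - P := by rw [mul_assoc]
      _ = star U * (U * (P + Q)) - P := by rw [key]
      _ = (star U * U) * (P + Q) - P := by rw [← mul_assoc]
      _ = Q := by rw [h1, one_mul]; abel
  have hQv : ∀ v : QWH, Q v = (Lzero.orthogonalProjectionOnto v : QWH) := fun v => rfl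
  have hker1 : LinearMap.ker ((star U * P * U - P - 1 : QWH →L[ℂ] QWH) : QWH →ₗ[ℂ] QWH) = Lzero := by
    rw [hPhi]
    ext v
    simp only [LinearMap.mem_ker, ContinuousLinearMap.coe_coe, ContinuousLinearMap.coe_sub', Pi.sub_apply,
      ContinuousLinearMap.one_apply, sub_eq_zero]
    constructor
    · intro h
      rw [← h, hQv]
      exact (Lzero.orthogonalProjectionOnto v).2
    · intro h
      rw [hQv]
      exact Submodule.starProjection_eq_self_iff.mpr h
  have hker2 : LinearMap.ker ((star U * P * U - P + 1 : QWH →L[ℂ] QWH) : QWH →ₗ[ℂ] QWH) = ⊥ := by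
    rw [hPhi, Submodule.eq_bot_iff]
    intro v hv
    simp only [LinearMap.mem_ker, ContinuousLinearMap.coe_coe, ContinuousLinearMap.coe_add', Pi.add_apply,
      ContinuousLinearMap.one_apply] at hv
    have hmem : v ∈ Lzero := by
      have : v = -(Q v) := by linear_combination (norm := module) hv
      rw [this, hQv]
      exact neg_mem (Lzero.orthogonalProjectionOnto v).2
    have hQvv : Q v = v := by rw [hQv]; exact Submodule.starProjection_eq_self_iff.mpr hmem
    rw [hQvv] at hv
    have h2 : (2:ℂ) • v = 0 := by rw [two_smul]; exact hv
    have := congrArg (fun w : QWH => (2:ℂ)⁻¹ • w) h2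
    simpa [smul_smul] using this
  refine ⟨hPhi, ?_, hker2, ?_⟩
  · rw [hker1]; exact finrank_Lzero
  · rw [hker1, hker2, finrank_Lzero, finrank_bot]
    norm_num
end

section
/- Let H be a complex Hilbert space, U a unitary operator on H, P an orthogonal projection, and Φ := U*PU − P. Then ker(Φ + I) = { x ∈ Ran P : P U x = 0 } (the kernel of PUP restricted to Ran P), and ker(Φ − I) = { x ∈ (Ran P)⊥ : U x ∈ Ran P } (the kernel of P⊥UP⊥ restricted to Ran P⊥ = (Ran P)⊥). -/
open scoped InnerProductSpace
open ContinuousLinearMap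

section Aux

variable {H : Type*} [NormedAddCommGroup H] [InnerProductSpace ℂ H] [CompleteSpace H]

lemma aux_Padj (P : H →L[ℂ] H) (hPsa : IsSelfAdjoint P) (x y : H) :
    ⟪P x, y⟫_ℂ = ⟪x, P y⟫_ℂ := by
  conv_lhs => rw [← hPsa.adjoint_eq]
  exact ContinuousLinearMap.adjoint_inner_left P y x

lemma aux_P2 (P : H →L[ℂ] H) (hPidem : P * P = P) (y : H) : P (P y) = P y := by
  simpa [ContinuousLinearMap.mul_apply] using DFunLike.congr_fun hPidem y

lemma aux_inner_P (P : H →L[ℂ] H) (hPsa : IsSelfAdjoint P) (hPidem : P * P = P) (y : H) :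
    ⟪P y, y⟫_ℂ = (‖P y‖ : ℂ) ^ 2 := by
  have h1 : ⟪P y, P y⟫_ℂ = ⟪y, P y⟫_ℂ := by
    rw [aux_Padj P hPsa, aux_P2 P hPidem]
  rw [aux_Padj P hPsa, ← h1, inner_self_eq_norm_sq_to_K]
  rfl

lemma aux_orth (P : H →L[ℂ] H) (hPsa : IsSelfAdjoint P) (hPidem : P * P = P) (y : H) :
    ⟪P y, y - P y⟫_ℂ = 0 := by
  rw [inner_sub_right, aux_inner_P P hPsa hPidem, inner_self_eq_norm_sq_to_K]
  exact sub_eq_zero.mpr rfl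

lemma aux_pyth (P : H →L[ℂ] H) (hPsa : IsSelfAdjoint P) (hPidem : P * P = P) (y : H) :
    ‖y‖ ^ 2 = ‖P y‖ ^ 2 + ‖y - P y‖ ^ 2 := by
  have h := norm_add_sq_eq_norm_sq_add_norm_sq_of_inner_eq_zero (P y) (y - P y)
    (aux_orth P hPsa hPidem y)
  rw [add_sub_cancel] at h
  simpa [pow_two] using h

end Aux

/-- for the flux operator `Φ = U*PU − P`,
`ker(Φ + I) = {x ∈ Ran P : P U x = 0}` and
`ker(Φ − I) = {x ∈ (Ran P)⊥ : U x ∈ Ran P}`. -/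
theorem stmt11 {H : Type*} [NormedAddCommGroup H] [InnerProductSpace ℂ H] [CompleteSpace H]
    (U P : H →L[ℂ] H) (hU : U ∈ unitary (H →L[ℂ] H))
    (hPsa : IsSelfAdjoint P) (hPidem : P * P = P) :
    (LinearMap.ker ((star U * P * U - P + 1 : H →L[ℂ] H) : H →ₗ[ℂ] H) : Set H) =
        {x : H | x ∈ LinearMap.range (P : H →ₗ[ℂ] H) ∧ P (U x) = 0} ∧
    (LinearMap.ker ((star U * P * U - P - 1 : H →L[ℂ] H) : H →ₗ[ℂ] H) : Set H) =
        {x : H | x ∈ (LinearMap.range (P : H →ₗ[ℂ] H))ᗮ ∧ U x ∈ LinearMap.range (P : H →ₗ[ℂ] H)} := by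
  have hAU : ∀ x y : H, ⟪(star U) x, y⟫_ℂ = ⟪x, U y⟫_ℂ := by
    intro x y
    rw [ContinuousLinearMap.star_eq_adjoint]
    exact ContinuousLinearMap.adjoint_inner_left U y x
  have hU1 : star U * U = 1 := (Unitary.mem_iff.mp hU).1
  have hUnorm : ∀ y : H, ‖U y‖ = ‖y‖ := fun y => U.norm_map_of_mem_unitary hU y
  constructor
  · ext x
    simp only [SetLike.mem_coe, LinearMap.mem_ker, Set.mem_setOf_eq,
      ContinuousLinearMap.add_apply, ContinuousLinearMap.sub_apply,
      ContinuousLinearMap.mul_apply, ContinuousLinearMap.one_apply, ContinuousLinearMap.coe_coe]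
    constructor
    · intro h
      -- take inner product with x
      have hin : ⟪(star U) (P (U x)) - P x + x, x⟫_ℂ = 0 := by rw [h, inner_zero_left]
      have hexp : (‖P (U x)‖ : ℂ) ^ 2 + (‖x - P x‖ : ℂ) ^ 2 = 0 := by
        have e1 : ⟪(star U) (P (U x)), x⟫_ℂ = (‖P (U x)‖ : ℂ) ^ 2 := by
          rw [hAU, aux_inner_P P hPsa hPidem]
        have e2 : ⟪x - P x, x⟫_ℂ = (‖x - P x‖ : ℂ) ^ 2 := by
          have hxx : x - P x + P x = x := by abel
          have : ⟪x - P x, x⟫_ℂ = ⟪x - P x, x - P x⟫_ℂ + ⟪x - P x, P x⟫_ℂ := by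
            rw [← inner_add_right, hxx]
          have hz : ⟪x - P x, P x⟫_ℂ = 0 := by
            have := aux_orth P hPsa hPidem x
            have := congrArg (starRingEnd ℂ) this
            simpa [inner_conj_symm] using this
          rw [this, hz, add_zero, inner_self_eq_norm_sq_to_K]
          rfl
        calc (‖P (U x)‖ : ℂ) ^ 2 + (‖x - P x‖ : ℂ) ^ 2
            = ⟪(star U) (P (U x)), x⟫_ℂ + ⟪x - P x, x⟫_ℂ := by rw [e1, e2]
          _ = ⟪(star U) (P (U x)) - P x + x, x⟫_ℂ := by
              rw [← inner_add_left]; congr 1; abel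
          _ = 0 := hin
      have hreal : ‖P (U x)‖ ^ 2 + ‖x - P x‖ ^ 2 = 0 := by exact_mod_cast hexp
      have h1 : ‖P (U x)‖ = 0 := by nlinarith [sq_nonneg ‖P (U x)‖, sq_nonneg ‖x - P x‖]
      have h2 : ‖x - P x‖ = 0 := by nlinarith [sq_nonneg ‖P (U x)‖, sq_nonneg ‖x - P x‖]
      have hx : P x = x := by
        have h3 := norm_eq_zero.mp h2
        have := sub_eq_zero.mp h3
        exact this.symm
      exact ⟨⟨x, hx⟩, norm_eq_zero.mp h1⟩
    · rintro ⟨⟨y, hy⟩, hPU⟩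
      rw [ContinuousLinearMap.coe_coe] at hy
      have hx : P x = x := by rw [← hy, aux_P2 P hPidem, hy]
      rw [hPU, map_zero, hx]
      abel
  · ext x
    simp only [SetLike.mem_coe, LinearMap.mem_ker, Set.mem_setOf_eq,
      ContinuousLinearMap.sub_apply, ContinuousLinearMap.mul_apply,
      ContinuousLinearMap.one_apply, ContinuousLinearMap.coe_coe]
    constructor
    · intro h
      have hin : ⟪(star U) (P (U x)) - P x - x, x⟫_ℂ = 0 := by rw [h, inner_zero_left]
      have hexp : (‖P (U x)‖ : ℂ) ^ 2 = (‖P x‖ : ℂ) ^ 2 + (‖x‖ : ℂ) ^ 2 := by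
        have e1 : ⟪(star U) (P (U x)), x⟫_ℂ = (‖P (U x)‖ : ℂ) ^ 2 := by
          rw [hAU, aux_inner_P P hPsa hPidem]
        have e2 : ⟪P x, x⟫_ℂ = (‖P x‖ : ℂ) ^ 2 := aux_inner_P P hPsa hPidem x
        have e3 : ⟪x, x⟫_ℂ = (‖x‖ : ℂ) ^ 2 := inner_self_eq_norm_sq_to_K x
        have : ⟪(star U) (P (U x)), x⟫_ℂ - ⟪P x, x⟫_ℂ - ⟪x, x⟫_ℂ = 0 := by
          rw [← inner_sub_left, ← inner_sub_left]; exact hin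
        rw [e1, e2, e3] at this
        linear_combination this
      have hreal : ‖P (U x)‖ ^ 2 = ‖P x‖ ^ 2 + ‖x‖ ^ 2 := by exact_mod_cast hexp
      have hpyth : ‖U x‖ ^ 2 = ‖P (U x)‖ ^ 2 + ‖U x - P (U x)‖ ^ 2 :=
        aux_pyth P hPsa hPidem (U x)
      have hnu : ‖U x‖ = ‖x‖ := hUnorm x
      have hzero : ‖P x‖ ^ 2 + ‖U x - P (U x)‖ ^ 2 = 0 := by
        rw [hnu] at hpyth; nlinarith
      have h1 : P x = 0 := by
        have : ‖P x‖ = 0 := by nlinarith [sq_nonneg ‖P x‖, sq_nonneg ‖U x - P (U x)‖]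
        exact norm_eq_zero.mp this
      have h2 : P (U x) = U x := by
        have : ‖U x - P (U x)‖ = 0 := by
          nlinarith [sq_nonneg ‖P x‖, sq_nonneg ‖U x - P (U x)‖]
        have h3 := norm_eq_zero.mp this
        exact (sub_eq_zero.mp h3).symm
      refine ⟨?_, ⟨U x, h2⟩⟩
      rw [Submodule.mem_orthogonal]
      rintro u ⟨z, rfl⟩
      rw [ContinuousLinearMap.coe_coe]
      rw [aux_Padj P hPsa, h1, inner_zero_right]
    · rintro ⟨hx, ⟨z, hz⟩⟩
      rw [ContinuousLinearMap.coe_coe] at hz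
      have h1 : P x = 0 := by
        have horth : ⟪P x, x⟫_ℂ = 0 := by
          exact (Submodule.mem_orthogonal _ x).mp hx (P x) ⟨x, rfl⟩
        rw [aux_inner_P P hPsa hPidem] at horth
        have : (‖P x‖ : ℂ) = 0 := by
          exact pow_eq_zero_iff (n := 2) (by norm_num) |>.mp horth
        exact norm_eq_zero.mp (by exact_mod_cast this)
      have h2 : P (U x) = U x := by rw [← hz, aux_P2 P hPidem, hz]
      have h3 : (star U) (U x) = x := by
        simpa [ContinuousLinearMap.mul_apply] using DFunLike.congr_fun hU1 x
      rw [h2, h3, h1]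
      abel
end

section
/- Let H be a complex Hilbert space, U a unitary operator on H, P an orthogonal projection, and Φ := U*PU − P. Then the map x ↦ Ux is a linear bijection from ker(Φ − I) onto { y ∈ Ran P : P U* y = 0 }; consequently dim ker(Φ − I) = dim ker(PU*P restricted to Ran P), and whenever ker(Φ − I) and ker(Φ + I) are finite-dimensional, ind(Φ) = dim ker(PU*P|_{Ran P}) − dim ker(PUP|_{Ran P}), i.e. minus the Fredholm index of PUP on Ran P. -/
open scoped InnerProductSpace

section Aux
variable {H : Type*} [NormedAddCommGroup H] [InnerProductSpace ℂ H] [CompleteSpace H]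

lemma innerP (P : H →L[ℂ] H) (hPsa : IsSelfAdjoint P) (a b : H) :
    ⟪P a, b⟫_ℂ = ⟪a, P b⟫_ℂ := by
  have h : ContinuousLinearMap.adjoint P = P := hPsa
  nth_rewrite 1 [← h]
  rw [ContinuousLinearMap.adjoint_inner_left]

lemma innerUstar (U : H →L[ℂ] H) (a b : H) :
    ⟪(star U) a, b⟫_ℂ = ⟪a, U b⟫_ℂ := by
  rw [ContinuousLinearMap.star_eq_adjoint, ContinuousLinearMap.adjoint_inner_left]

lemma innerU (U : H →L[ℂ] H) (a b : H) :
    ⟪U a, b⟫_ℂ = ⟪a, (star U) b⟫_ℂ := by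
  rw [ContinuousLinearMap.star_eq_adjoint, ContinuousLinearMap.adjoint_inner_right]

lemma projNormSq (P : H →L[ℂ] H) (hPsa : IsSelfAdjoint P) (hPP : ∀ z, P (P z) = P z)
    (z : H) (h : ⟪P z, z⟫_ℂ = 0) : P z = 0 := by
  have : ⟪P z, P z⟫_ℂ = 0 := by
    rw [innerP P hPsa, hPP, ← inner_conj_symm, h, map_zero]
  exact inner_self_eq_zero.mp this

lemma kerA (U P : H →L[ℂ] H) (hU : U ∈ unitary (H →L[ℂ] H))
    (hPsa : IsSelfAdjoint P) (hPidem : P * P = P) (x : H) :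
    (star U * P * U - P - 1) x = 0 ↔ (P x = 0 ∧ P (U x) = U x) := by
  have hsu : ∀ z, star U (U z) = z := fun z => by
    have := congrArg (fun f : H →L[ℂ] H => f z) hU.1
    simpa using this
  have hus : ∀ z, U (star U z) = z := fun z => by
    have := congrArg (fun f : H →L[ℂ] H => f z) hU.2
    simpa using this
  have hPP : ∀ z, P (P z) = P z := fun z => by
    have := congrArg (fun f : H →L[ℂ] H => f z) hPidem
    simpa using this
  constructor
  · intro h
    have h1 : star U (P (U x)) = P x + x := by
      have h' := h
      simp only [ContinuousLinearMap.sub_apply, ContinuousLinearMap.mul_apply,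
        ContinuousLinearMap.one_apply] at h'
      rw [sub_sub, sub_eq_zero] at h'
      exact h'
    have hQ : star U (P (U (star U (P (U x))))) = star U (P (U x)) := by
      rw [hus, hPP]
    rw [h1] at hQ
    have h4 : star U (P (U (P x))) + star U (P (U x)) = P x + x := by
      simpa [map_add] using hQ
    rw [h1] at h4
    have h2 : star U (P (U (P x))) = 0 := add_eq_right.mp h4
    have hPUPx : P (U (P x)) = 0 := by
      have := congrArg U h2
      rwa [hus, map_zero] at this
    have hPQx : P (star U (P (U x))) = P x + P x := by
      rw [h1, map_add, hPP]
    have hinner0 : ⟪P (star U (P (U x))), x⟫_ℂ = 0 := by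
      rw [innerP P hPsa, innerUstar, innerP P hPsa, hPUPx, inner_zero_right]
    have h2P : ⟪P x, x⟫_ℂ + ⟪P x, x⟫_ℂ = 0 := by
      rw [← inner_add_left, ← hPQx]; exact hinner0
    have hPx0 : P x = 0 := projNormSq P hPsa hPP x (add_self_eq_zero.mp h2P)
    refine ⟨hPx0, ?_⟩
    have hx : star U (P (U x)) = x := by rw [h1, hPx0, zero_add]
    have := congrArg U hx
    rwa [hus] at this
  · rintro ⟨h1, h2⟩
    simp only [ContinuousLinearMap.sub_apply, ContinuousLinearMap.mul_apply,
      ContinuousLinearMap.one_apply, h1, h2, hsu, sub_zero, sub_self]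

lemma kerB (U P : H →L[ℂ] H) (hU : U ∈ unitary (H →L[ℂ] H))
    (hPsa : IsSelfAdjoint P) (hPidem : P * P = P) (x : H) :
    (star U * P * U - P + 1) x = 0 ↔ (P x = x ∧ P (U x) = 0) := by
  have hsu : ∀ z, star U (U z) = z := fun z => by
    have := congrArg (fun f : H →L[ℂ] H => f z) hU.1
    simpa using this
  have hus : ∀ z, U (star U z) = z := fun z => by
    have := congrArg (fun f : H →L[ℂ] H => f z) hU.2
    simpa using this
  have hPP : ∀ z, P (P z) = P z := fun z => by
    have := congrArg (fun f : H →L[ℂ] H => f z) hPidem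
    simpa using this
  constructor
  · intro h
    have h1 : P x = star U (P (U x)) + x := by
      have h' := h
      simp only [ContinuousLinearMap.add_apply, ContinuousLinearMap.sub_apply,
        ContinuousLinearMap.mul_apply, ContinuousLinearMap.one_apply] at h'
      rw [sub_add, sub_eq_zero] at h'
      rw [h']; abel
    have h2 : P (star U (P (U x))) = 0 := by
      have h' := congrArg P h1
      rw [hPP, map_add] at h'
      exact right_eq_add.mp h'
    have hQP : star U (P (U (P x))) = star U (P (U x)) + star U (P (U x)) := by
      rw [h1, map_add, hus, map_add, hPP, map_add]
    have hinner0 : ⟪star U (P (U (P x))), x⟫_ℂ = 0 := by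
      rw [innerUstar, innerP P hPsa, innerU, innerP P hPsa, h2, inner_zero_right]
    have h2Q : ⟪star U (P (U x)), x⟫_ℂ + ⟪star U (P (U x)), x⟫_ℂ = 0 := by
      rw [← inner_add_left, ← hQP]; exact hinner0
    have hQxx : ⟪P (U x), U x⟫_ℂ = 0 := by
      rw [← innerUstar]; exact add_self_eq_zero.mp h2Q
    have hPUx0 : P (U x) = 0 := projNormSq P hPsa hPP (U x) hQxx
    refine ⟨?_, hPUx0⟩
    rw [h1, hPUx0, map_zero, zero_add]
  · rintro ⟨h1, h2⟩
    simp only [ContinuousLinearMap.add_apply, ContinuousLinearMap.sub_apply,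
      ContinuousLinearMap.mul_apply, ContinuousLinearMap.one_apply, h1, h2, map_zero]
    abel

end Aux

/-- for the flux operator `Φ = U*PU − P`, `x ↦ Ux` is a linear bijection from
`ker(Φ − I)` onto `{y ∈ Ran P : P U* y = 0} = ker(PU*P|_{Ran P})`; consequently
`dim ker(Φ − I) = dim ker(PU*P|_{Ran P})` and, when both `ker(Φ ∓ I)` are finite
dimensional, `ind(Φ) = dim ker(PU*P|_{Ran P}) − dim ker(PUP|_{Ran P})`. -/
theorem stmt12 {H : Type*} [NormedAddCommGroup H] [InnerProductSpace ℂ H] [CompleteSpace H]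
    (U P : H →L[ℂ] H) (hU : U ∈ unitary (H →L[ℂ] H))
    (hPsa : IsSelfAdjoint P) (hPidem : P * P = P) :
    Set.BijOn U (LinearMap.ker ((star U * P * U - P - 1 : H →L[ℂ] H) : H →ₗ[ℂ] H) : Set H)
        {y : H | y ∈ LinearMap.range (P : H →ₗ[ℂ] H) ∧ P (star U y) = 0} ∧
    Module.rank ℂ (LinearMap.ker ((star U * P * U - P - 1 : H →L[ℂ] H) : H →ₗ[ℂ] H)) =
        Module.rank ℂ (LinearMap.range (P : H →ₗ[ℂ] H) ⊓ LinearMap.ker ((P * star U : H →L[ℂ] H) : H →ₗ[ℂ] H) : Submodule ℂ H) ∧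
    (FiniteDimensional ℂ (LinearMap.ker ((star U * P * U - P - 1 : H →L[ℂ] H) : H →ₗ[ℂ] H)) →
      FiniteDimensional ℂ (LinearMap.ker ((star U * P * U - P + 1 : H →L[ℂ] H) : H →ₗ[ℂ] H)) →
      (Module.finrank ℂ (LinearMap.ker ((star U * P * U - P - 1 : H →L[ℂ] H) : H →ₗ[ℂ] H)) : ℤ)
          - Module.finrank ℂ (LinearMap.ker ((star U * P * U - P + 1 : H →L[ℂ] H) : H →ₗ[ℂ] H))
        = (Module.finrank ℂ
              (LinearMap.range (P : H →ₗ[ℂ] H) ⊓ LinearMap.ker ((P * star U : H →L[ℂ] H) : H →ₗ[ℂ] H) : Submodule ℂ H) : ℤ)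
          - Module.finrank ℂ
              (LinearMap.range (P : H →ₗ[ℂ] H) ⊓ LinearMap.ker ((P * U : H →L[ℂ] H) : H →ₗ[ℂ] H) : Submodule ℂ H)) := by
  have hsu : ∀ z, star U (U z) = z := fun z => by
    have := congrArg (fun f : H →L[ℂ] H => f z) hU.1
    simpa using this
  have hus : ∀ z, U (star U z) = z := fun z => by
    have := congrArg (fun f : H →L[ℂ] H => f z) hU.2
    simpa using this
  have hPP : ∀ z, P (P z) = P z := fun z => by
    have := congrArg (fun f : H →L[ℂ] H => f z) hPidem
    simpa using this
  have hrange : ∀ y : H, y ∈ LinearMap.range (P : H →ₗ[ℂ] H) ↔ P y = y := by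
    intro y
    constructor
    · rintro ⟨z, rfl⟩; exact hPP z
    · intro h; exact ⟨y, h⟩
  have key : ∀ x : H, x ∈ LinearMap.ker ((star U * P * U - P - 1 : H →L[ℂ] H) : H →ₗ[ℂ] H) ↔
      (P x = 0 ∧ P (U x) = U x) := fun x => by
    rw [LinearMap.mem_ker]; exact kerA U P hU hPsa hPidem x
  have keyB : ∀ x : H, x ∈ LinearMap.ker ((star U * P * U - P + 1 : H →L[ℂ] H) : H →ₗ[ℂ] H) ↔
      (P x = x ∧ P (U x) = 0) := fun x => by
    rw [LinearMap.mem_ker]; exact kerB U P hU hPsa hPidem x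
  have hmemInf : ∀ y : H, y ∈ (LinearMap.range (P : H →ₗ[ℂ] H) ⊓ LinearMap.ker ((P * star U : H →L[ℂ] H) : H →ₗ[ℂ] H) :
      Submodule ℂ H) ↔ (P y = y ∧ P (star U y) = 0) := by
    intro y
    rw [Submodule.mem_inf, hrange, LinearMap.mem_ker, ContinuousLinearMap.coe_coe, ContinuousLinearMap.mul_apply]
  -- the linear equivalence
  let e : (LinearMap.ker ((star U * P * U - P - 1 : H →L[ℂ] H) : H →ₗ[ℂ] H)) ≃ₗ[ℂ]
      (LinearMap.range (P : H →ₗ[ℂ] H) ⊓ LinearMap.ker ((P * star U : H →L[ℂ] H) : H →ₗ[ℂ] H) : Submodule ℂ H) :=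
  { toFun := fun x => ⟨U x.1, by
      obtain ⟨h1, h2⟩ := (key x.1).mp x.2
      exact (hmemInf _).mpr ⟨h2, by rw [hsu]; exact h1⟩⟩
    map_add' := fun a b => Subtype.ext (by exact map_add U a.1 b.1)
    map_smul' := fun c a => Subtype.ext (by exact map_smul U c a.1)
    invFun := fun y => ⟨star U y.1, by
      obtain ⟨h1, h2⟩ := (hmemInf y.1).mp y.2
      exact (key _).mpr ⟨h2, by rw [hus]; exact h1⟩⟩
    left_inv := fun x => Subtype.ext (hsu x.1)
    right_inv := fun y => Subtype.ext (hus y.1) }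
  refine ⟨?_, e.rank_eq, ?_⟩
  · refine ⟨?_, ?_, ?_⟩
    · intro x hx
      obtain ⟨h1, h2⟩ := (key x).mp hx
      exact ⟨⟨U x, h2⟩, by rw [hsu]; exact h1⟩
    · have hinj : Function.Injective U := fun a b hab => by
        rw [← hsu a, ← hsu b, hab]
      exact hinj.injOn
    · rintro y ⟨hy1, hy2⟩
      refine ⟨star U y, ?_, hus y⟩
      exact (key _).mpr ⟨hy2, by rw [hus]; exact (hrange y).mp hy1⟩
  · intro _ _
    have f1 : Module.finrank ℂ (LinearMap.ker ((star U * P * U - P - 1 : H →L[ℂ] H) : H →ₗ[ℂ] H)) =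
        Module.finrank ℂ (LinearMap.range (P : H →ₗ[ℂ] H) ⊓ LinearMap.ker ((P * star U : H →L[ℂ] H) : H →ₗ[ℂ] H) :
          Submodule ℂ H) := e.finrank_eq
    have hsub : LinearMap.ker ((star U * P * U - P + 1 : H →L[ℂ] H) : H →ₗ[ℂ] H) =
        (LinearMap.range (P : H →ₗ[ℂ] H) ⊓ LinearMap.ker ((P * U : H →L[ℂ] H) : H →ₗ[ℂ] H) : Submodule ℂ H) := by
      ext x
      rw [keyB, Submodule.mem_inf, hrange, LinearMap.mem_ker,
        ContinuousLinearMap.coe_coe, ContinuousLinearMap.mul_apply]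
    rw [f1, hsub]
end

section
/- Let H be a complex Hilbert space, U a unitary operator on H, P an orthogonal projection, and Φ := U*PU − P. Then ker(Φ − I) = ker(Φ² − I) ∩ (Ran P)⊥ and ker(Φ + I) = ker(Φ² − I) ∩ Ran P; consequently, if ker(Φ² − I) is finite-dimensional, then ind(Φ) = dim( ker(Φ² − I) ∩ (Ran P)⊥ ) − dim( ker(Φ² − I) ∩ Ran P ). -/
section Aux

variable {H : Type*} [NormedAddCommGroup H] [InnerProductSpace ℂ H] [CompleteSpace H]

private lemma sym13 {R : H →L[ℂ] H} (hR : IsSelfAdjoint R) (v w : H) :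
    (inner ℂ (R v) w : ℂ) = inner ℂ v (R w) :=
  (ContinuousLinearMap.isSelfAdjoint_iff_isSymmetric.mp hR) v w

private lemma aux_zero13 {R : H →L[ℂ] H} (hR : IsSelfAdjoint R) (hRi : R * R = R)
    {v : H} (h : (inner ℂ v (R v) : ℂ) = 0) : R v = 0 := by
  have h2 : (inner ℂ (R v) (R v) : ℂ) = 0 := by
    calc (inner ℂ (R v) (R v) : ℂ) = inner ℂ v (R (R v)) := sym13 hR v (R v)
    _ = inner ℂ v (R v) := by rw [← ContinuousLinearMap.mul_apply, hRi]
    _ = 0 := h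
  exact inner_self_eq_zero.mp h2

private lemma key13 {Q P : H →L[ℂ] H} (hQ : IsSelfAdjoint Q) (hQi : Q * Q = Q)
    (hP : IsSelfAdjoint P) (hPi : P * P = P) (x : H) :
    (Q - P) x = x ↔ ((Q - P) * (Q - P)) x = x ∧ P x = 0 := by
  have hQQ : ∀ v, Q (Q v) = Q v := fun v => by rw [← ContinuousLinearMap.mul_apply, hQi]
  have hPP : ∀ v, P (P v) = P v := fun v => by rw [← ContinuousLinearMap.mul_apply, hPi]
  constructor
  · intro h
    have h' : Q x - P x = x := by simpa using h
    have hQP : Q (P x) = 0 := by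
      have h1 := congrArg Q h'
      rw [map_sub, hQQ] at h1
      exact sub_eq_self.mp h1
    have hPQ : P (Q x) = P x + P x := by
      have h1 := congrArg P h'
      rw [map_sub, hPP] at h1
      exact sub_eq_iff_eq_add.mp h1
    have hin : (inner ℂ x (P (Q x)) : ℂ) = 0 := by
      rw [← sym13 hP, ← sym13 hQ, hQP, inner_zero_left]
    have hPx0 : P x = 0 := by
      apply aux_zero13 hP hPi
      rw [hPQ, inner_add_right] at hin
      have h3 : (2 : ℂ) * inner ℂ x (P x) = 0 := by linear_combination hin
      simpa using h3
    refine ⟨?_, hPx0⟩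
    rw [ContinuousLinearMap.mul_apply, h, h]
  · rintro ⟨h2, hp⟩
    rw [ContinuousLinearMap.mul_apply] at h2
    have hphi : (Q - P) x = Q x := by
      rw [ContinuousLinearMap.sub_apply, hp, sub_zero]
    rw [hphi, ContinuousLinearMap.sub_apply, hQQ] at h2
    have hQPQ : Q (P (Q x)) = 0 := by
      have h1 := congrArg Q h2
      rw [map_sub, hQQ] at h1
      exact sub_eq_self.mp h1
    have hPQ0 : P (Q x) = 0 := by
      apply aux_zero13 hP hPi
      rw [sym13 hQ, hQPQ, inner_zero_right]
    have hQx : Q x = x := by rw [hPQ0, sub_zero] at h2; exact h2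
    rw [ContinuousLinearMap.sub_apply, hQx, hp, sub_zero]

private lemma key13' {Q P : H →L[ℂ] H} (hQ : IsSelfAdjoint Q) (hQi : Q * Q = Q)
    (hP : IsSelfAdjoint P) (hPi : P * P = P) (x : H) :
    (Q - P) x = -x ↔ ((Q - P) * (Q - P)) x = x ∧ P x = x := by
  have hQQ : ∀ v, Q (Q v) = Q v := fun v => by rw [← ContinuousLinearMap.mul_apply, hQi]
  have hsq : (P - Q) * (P - Q) = (Q - P) * (Q - P) := by
    rw [show P - Q = -(Q - P) by abel, neg_mul_neg]
  constructor
  · intro h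
    have h' : (P - Q) x = x := by
      rw [ContinuousLinearMap.sub_apply]
      rw [ContinuousLinearMap.sub_apply] at h
      rw [← neg_sub (Q x) (P x), h, neg_neg]
    obtain ⟨ha, hb⟩ := (key13 hP hPi hQ hQi x).mp h'
    rw [hsq] at ha
    refine ⟨ha, ?_⟩
    rw [ContinuousLinearMap.sub_apply, hb, zero_sub, neg_inj] at h
    exact h
  · rintro ⟨h2, hp⟩
    rw [ContinuousLinearMap.mul_apply] at h2
    have hphi : (Q - P) x = Q x - x := by
      rw [ContinuousLinearMap.sub_apply, hp]
    rw [hphi, ContinuousLinearMap.sub_apply, map_sub, map_sub, hQQ, hp, sub_self,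
      zero_sub, neg_sub] at h2
    have hPQ0 : P (Q x) = 0 := sub_eq_self.mp h2
    have hQx0 : Q x = 0 := by
      apply aux_zero13 hQ hQi
      calc (inner ℂ x (Q x) : ℂ) = inner ℂ (P x) (Q x) := by rw [hp]
      _ = inner ℂ x (P (Q x)) := sym13 hP x (Q x)
      _ = 0 := by rw [hPQ0, inner_zero_right]
    rw [ContinuousLinearMap.sub_apply, hQx0, hp, zero_sub]

private lemma mem_orth_iff13 {P : H →L[ℂ] H} (hP : IsSelfAdjoint P) (hPi : P * P = P) (x : H) :
    x ∈ (LinearMap.range (P : H →ₗ[ℂ] H))ᗮ ↔ P x = 0 := by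
  rw [Submodule.mem_orthogonal]
  constructor
  · intro h
    apply aux_zero13 hP hPi
    have h1 : (inner ℂ (P x) x : ℂ) = 0 := h (P x) ⟨x, rfl⟩
    exact inner_eq_zero_symm.mpr h1
  · intro h u hu
    obtain ⟨y, rfl⟩ := LinearMap.mem_range.mp hu
    rw [ContinuousLinearMap.coe_coe, sym13 hP, h, inner_zero_right]

omit [CompleteSpace H] in
private lemma mem_range_iff13 {P : H →L[ℂ] H} (hPi : P * P = P) (x : H) :
    x ∈ LinearMap.range (P : H →ₗ[ℂ] H) ↔ P x = x := by
  constructor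
  · intro hx
    obtain ⟨y, rfl⟩ := LinearMap.mem_range.mp hx
    rw [ContinuousLinearMap.coe_coe, ← ContinuousLinearMap.mul_apply, hPi]
  · intro h
    exact LinearMap.mem_range.mpr ⟨x, h⟩

end Aux

/-- for the flux operator `Φ = U*PU − P`,
`ker(Φ − I) = ker(Φ² − I) ∩ (Ran P)⊥` and `ker(Φ + I) = ker(Φ² − I) ∩ Ran P`; hence if
`ker(Φ² − I)` is finite dimensional,
`ind(Φ) = dim(ker(Φ² − I) ∩ (Ran P)⊥) − dim(ker(Φ² − I) ∩ Ran P)`. -/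
theorem stmt13 {H : Type*} [NormedAddCommGroup H] [InnerProductSpace ℂ H] [CompleteSpace H]
    (U P : H →L[ℂ] H) (hU : U ∈ unitary (H →L[ℂ] H))
    (hPsa : IsSelfAdjoint P) (hPidem : P * P = P) :
    LinearMap.ker ((star U * P * U - P - 1 : H →L[ℂ] H) : H →ₗ[ℂ] H) =
        LinearMap.ker (((star U * P * U - P) ^ 2 - 1 : H →L[ℂ] H) : H →ₗ[ℂ] H) ⊓ (LinearMap.range (P : H →ₗ[ℂ] H))ᗮ ∧
    LinearMap.ker ((star U * P * U - P + 1 : H →L[ℂ] H) : H →ₗ[ℂ] H) =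
        LinearMap.ker (((star U * P * U - P) ^ 2 - 1 : H →L[ℂ] H) : H →ₗ[ℂ] H) ⊓ LinearMap.range (P : H →ₗ[ℂ] H) ∧
    (FiniteDimensional ℂ (LinearMap.ker (((star U * P * U - P) ^ 2 - 1 : H →L[ℂ] H) : H →ₗ[ℂ] H)) →
      (Module.finrank ℂ (LinearMap.ker ((star U * P * U - P - 1 : H →L[ℂ] H) : H →ₗ[ℂ] H)) : ℤ)
          - Module.finrank ℂ (LinearMap.ker ((star U * P * U - P + 1 : H →L[ℂ] H) : H →ₗ[ℂ] H))
        = (Module.finrank ℂ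
              (LinearMap.ker (((star U * P * U - P) ^ 2 - 1 : H →L[ℂ] H) : H →ₗ[ℂ] H) ⊓ (LinearMap.range (P : H →ₗ[ℂ] H))ᗮ :
                Submodule ℂ H) : ℤ)
          - Module.finrank ℂ
              (LinearMap.ker (((star U * P * U - P) ^ 2 - 1 : H →L[ℂ] H) : H →ₗ[ℂ] H) ⊓ LinearMap.range (P : H →ₗ[ℂ] H) :
                Submodule ℂ H)) := by
  set Q : H →L[ℂ] H := star U * P * U with hQdef
  have hQsa : IsSelfAdjoint Q := by
    rw [IsSelfAdjoint, hQdef]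
    simp only [star_mul, star_star, hPsa.star_eq, mul_assoc]
  have hQi : Q * Q = Q := by
    rw [hQdef]
    simp only [mul_assoc]
    rw [← mul_assoc U (star U) (P * U), hU.2, one_mul, ← mul_assoc P P U, hPidem]
  have hsq : (Q - P) ^ 2 = (Q - P) * (Q - P) := sq (Q - P)
  have h1 : LinearMap.ker ((Q - P - 1 : H →L[ℂ] H) : H →ₗ[ℂ] H) =
      LinearMap.ker (((Q - P) ^ 2 - 1 : H →L[ℂ] H) : H →ₗ[ℂ] H) ⊓ (LinearMap.range (P : H →ₗ[ℂ] H))ᗮ := by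
    ext x
    rw [Submodule.mem_inf, LinearMap.mem_ker, LinearMap.mem_ker,
      mem_orth_iff13 hPsa hPidem, hsq]
    simp only [ContinuousLinearMap.coe_coe]
    have e1 : (Q - P - 1) x = (Q - P) x - x := by
      simp [ContinuousLinearMap.sub_apply]
    have e2 : ((Q - P) * (Q - P) - 1) x = ((Q - P) * (Q - P)) x - x := by
      simp [ContinuousLinearMap.sub_apply]
    rw [e1, e2, sub_eq_zero, sub_eq_zero]
    exact key13 hQsa hQi hPsa hPidem x
  have h2 : LinearMap.ker ((Q - P + 1 : H →L[ℂ] H) : H →ₗ[ℂ] H) =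
      LinearMap.ker (((Q - P) ^ 2 - 1 : H →L[ℂ] H) : H →ₗ[ℂ] H) ⊓ LinearMap.range (P : H →ₗ[ℂ] H) := by
    ext x
    rw [Submodule.mem_inf, LinearMap.mem_ker, LinearMap.mem_ker,
      mem_range_iff13 hPidem, hsq]
    simp only [ContinuousLinearMap.coe_coe]
    have e1 : (Q - P + 1) x = (Q - P) x + x := by
      simp [ContinuousLinearMap.add_apply]
    have e2 : ((Q - P) * (Q - P) - 1) x = ((Q - P) * (Q - P)) x - x := by
      simp [ContinuousLinearMap.sub_apply]
    rw [e1, e2, sub_eq_zero, add_eq_zero_iff_eq_neg]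
    exact key13' hQsa hQi hPsa hPidem x
  exact ⟨h1, h2, fun _ => by rw [h1, h2]⟩
end
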